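/- Let d be a positive integer and α > 0. Define φ : (0, ∞) → ℝ by φ(c) := c^{-dα/2} [ (1+α)^{-d/2} − (1 + 1/α) (1 + α/c)^{-d/2} ]. Then c = 1 is the unique minimizer of φ on (0, ∞): φ(1) ≤ φ(c) for all c > 0, with equality only if c = 1. -/

import Mathlib

/-!
Write `s = d/2`, `X = c^{sα}` and `P = (1+α)^s`. Clearing denominators,
`φ(c) - φ(1)` is a positive multiple of `(X+α)/(1+α) · ((c+α)/(1+α))^s - c^s`.
Since `c^s = X^{1/(1+α)} · (c^{1/(1+α)})^s`, this gap is positive for `c ≠ 1` by the strict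
weighted AM-GM inequality `x^{1/(1+α)} < (x+α)/(1+α)` (Bernoulli), applied to `x = X` and `x = c`.
-/

open Real

theorem rpow_inv_one_add_lt_div {α x : ℝ} (hα : 0 < α) (hx : 0 < x) (hx1 : x ≠ 1) :
    x ^ (1 + α)⁻¹ < (x + α) / (1 + α) := by
  have h := rpow_one_add_lt_one_add_mul_self (s := x - 1) (by linarith) (sub_ne_zero.2 hx1)
    (p := (1 + α)⁻¹) (by positivity) (inv_lt_one_of_one_lt₀ (by linarith))
  rw [add_sub_cancel] at h
  convert h using 1
  field_simp
  ring

theorem rpow_lt_div_mul_div_rpow {s α c : ℝ} (hs : 0 < s) (hα : 0 < α) (hc : 0 < c)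
    (hc1 : c ≠ 1) :
    c ^ s < (c ^ (s * α) + α) / (1 + α) * ((c + α) / (1 + α)) ^ s := by
  have hpow_ne_one : c ^ (s * α) ≠ 1 := by
    rw [← one_rpow (s * α)]
    exact (rpow_left_inj hc.le zero_le_one (by positivity)).not.2 hc1
  have hsplit : c ^ s = (c ^ (s * α)) ^ (1 + α)⁻¹ * (c ^ (1 + α)⁻¹) ^ s := by
    rw [← rpow_mul hc.le, ← rpow_mul hc.le, ← rpow_add hc]
    congr 1
    field_simp
    ring
  rw [hsplit]
  exact mul_lt_mul'' (rpow_inv_one_add_lt_div hα (by positivity) hpow_ne_one)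
    (rpow_lt_rpow (by positivity) (rpow_inv_one_add_lt_div hα hc hc1) hs)
    (by positivity) (by positivity)

/-- The criterion `φ` of the statement, with `s = d/2`. -/
noncomputable def dpdCriterion (s α c : ℝ) : ℝ :=
  c ^ (-(s * α)) * ((1 + α) ^ (-s) - (1 + 1 / α) * (1 + α / c) ^ (-s))

theorem dpdCriterion_one (s α : ℝ) (hα : 0 < α) :
    dpdCriterion s α 1 = -(1 + α) ^ (-s) / α := by
  rw [dpdCriterion, one_rpow, div_one, one_mul]
  field_simp
  ring

theorem dpdCriterion_sub_dpdCriterion_one {s α c : ℝ} (hα : 0 < α) (hc : 0 < c) :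
    dpdCriterion s α c - dpdCriterion s α 1 =
      (1 + α) / (α * c ^ (s * α) * (c + α) ^ s) *
        ((c ^ (s * α) + α) / (1 + α) * ((c + α) / (1 + α)) ^ s - c ^ s) := by
  have h1 : 1 + α / c = (c + α) / c := by field_simp
  rw [dpdCriterion_one s α hα, dpdCriterion, h1, rpow_neg hc.le, rpow_neg (by positivity),
    rpow_neg (by positivity), div_rpow (by positivity) hc.le,
    div_rpow (by positivity) (by positivity)]
  field_simp
  ring

theorem dpdCriterion_one_lt {s α c : ℝ} (hs : 0 < s) (hα : 0 < α) (hc : 0 < c)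
    (hc1 : c ≠ 1) : dpdCriterion s α 1 < dpdCriterion s α c := by
  rw [← sub_pos, dpdCriterion_sub_dpdCriterion_one hα hc]
  exact mul_pos (by positivity) (sub_pos.2 (rpow_lt_div_mul_div_rpow hs hα hc hc1))

/-- The scalar criterion
`φ(c) = c^{-dα/2} [ (1+α)^{-d/2} − (1+1/α)(1+α/c)^{-d/2} ]` is uniquely
minimized on `(0, ∞)` at `c = 1`. -/
theorem scalar_dpd_criterion_unique_minimizer (d : ℕ) (hd : 0 < d)
    (α : ℝ) (hα : 0 < α)
    (φ : ℝ → ℝ)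
    (hφ : ∀ c : ℝ, 0 < c →
      φ c = c ^ (-((d : ℝ) * α) / 2) *
        ((1 + α) ^ (-(d : ℝ) / 2) - (1 + 1 / α) * (1 + α / c) ^ (-(d : ℝ) / 2))) :
    ∀ c : ℝ, 0 < c → φ 1 ≤ φ c ∧ (φ c = φ 1 → c = 1) := by
  have hφ_eq : ∀ c : ℝ, 0 < c → φ c = dpdCriterion (d / 2) α c := fun c hc => by
    rw [hφ c hc, dpdCriterion]
    ring_nf
  intro c hc
  rcases eq_or_ne c 1 with rfl | hc1
  · exact ⟨le_rfl, fun _ => rfl⟩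
  have hlt : φ 1 < φ c := by
    rw [hφ_eq 1 one_pos, hφ_eq c hc]
    exact dpdCriterion_one_lt (by positivity) hα hc hc1
  exact ⟨hlt.le, fun h => absurd h hlt.ne'⟩
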